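/- Let < be any strict linear order on M₀ such that (M₀, <) is ultrahomogeneous and every E₁-class of M₀ is convex with respect to <. Then the six-element ordered structure B embeds into (M₀, <), where B = {a₁ < a₂ < a₃ < a₄ < b₁ < b₂} satisfies: all six elements lie in pairwise distinct E₁-classes; the pairs {a₁, a₂} and {b₁, b₂} are E₂-equivalent; all other pairs of distinct two-element subsets of B are E₂-inequivalent; and for each k ∈ {3, 4, 5} all k-element subsets of B are E_k-equivalent. -/

import Mathlib

open FirstOrder Language Structure CategoryTheory

/-- The language `L₀` with a `2n`-ary relation symbol `E_n` for each `n ≥ 1`. -/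
def L₀ : FirstOrder.Language where
  Functions := fun _ => Empty
  Relations := fun k => {n : ℕ // 0 < n ∧ k = n + n}

/-- The relation symbol `E_n`. -/
def Esymb (n : ℕ) (hn : 0 < n) : L₀.Relations (n + n) := ⟨n, hn, rfl⟩

/-- `E_n(x̄, ȳ)` in an `L₀`-structure. -/
def ERel (M : Type*) [L₀.Structure M] (n : ℕ) (hn : 0 < n) (x y : Fin n → M) : Prop :=
  Structure.RelMap (Esymb n hn) (Fin.append x y)

/-- The defining conditions for membership in `K₀`: each `E_n` holds only on pairs of
injective `n`-tuples, is invariant under permuting the entries of each tuple separately,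
and induces an equivalence relation on `n`-element subsets. -/
def IsK0Struct (C : Type*) [L₀.Structure C] : Prop :=
  ∀ (n : ℕ) (hn : 0 < n),
    (∀ x y : Fin n → C, ERel C n hn x y → Function.Injective x ∧ Function.Injective y) ∧
    (∀ (x y : Fin n → C) (σ τ : Equiv.Perm (Fin n)),
        ERel C n hn x y → ERel C n hn (x ∘ σ) (y ∘ τ)) ∧
    (∀ x : Fin n → C, Function.Injective x → ERel C n hn x x) ∧
    (∀ x y : Fin n → C, ERel C n hn x y → ERel C n hn y x) ∧
    (∀ x y z : Fin n → C, ERel C n hn x y → ERel C n hn y z → ERel C n hn x z)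

/-- The class `K₀` of finite `L₀`-structures as above. -/
def K₀ : Set (Bundled L₀.Structure) := {C | Finite C ∧ IsK0Struct C}

/-- A language with a single binary relation symbol (for a linear order). -/
def Lord : FirstOrder.Language where
  Functions := fun _ => Empty
  Relations := fun k => PLift (k = 2)

/-- Interpret the binary relation symbol of `Lord` by a given relation `r`. -/
def ordStructure (M : Type*) (r : M → M → Prop) : Lord.Structure M where
  funMap := fun f => f.elim
  RelMap := fun {k} R v => r (v (Fin.cast R.down.symm 0)) (v (Fin.cast R.down.symm 1))

/-- The language of `L₀` together with one extra binary relation symbol `<`. -/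
abbrev L₀lt : FirstOrder.Language := L₀.sum Lord

/-- The expansion of an `L₀`-structure by the binary relation `r`. -/
def expStr (M : Type*) [L₀.Structure M] (r : M → M → Prop) : L₀lt.Structure M :=
  @Language.sumStructure L₀ Lord M _ (ordStructure M r)

/-- The Ramsey property for a class `K` of finite structures: for all `A, B ∈ K` and
`k ≥ 1` there is `C ∈ K` such that every `k`-coloring of the copies of `A` in `C` is
monochromatic on the copies of `A` inside some copy `B'` of `B` in `C`. -/
def RamseyProperty {L : FirstOrder.Language} (K : Set (Bundled L.Structure)) : Prop :=
  ∀ A B : Bundled L.Structure, A ∈ K → B ∈ K → ∀ k : ℕ, 0 < k →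
    ∃ C : Bundled L.Structure, C ∈ K ∧
      ∀ χ : {S : L.Substructure C // Nonempty (S ≃[L] A)} → Fin k,
        ∃ B' : L.Substructure C, Nonempty (B' ≃[L] B) ∧
          ∀ S T : {S : L.Substructure C // Nonempty (S ≃[L] A)},
            S.1 ≤ B' → T.1 ≤ B' → χ S = χ T

/-!
The age of `M₀` is `K₀`, so it suffices to find a single finite structure in `K₀` which, however
it is embedded into `(M₀, <)`, contains a copy of `B`. Take six `E₁`-classes with one point in
each, and for every permutation `σ` of the classes a gadget of four new points in the classes
`σ 0, σ 1, σ 4, σ 5` whose lower pair is `E₂`-equivalent to its upper pair; no other pairs are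
`E₂`-equivalent and all injective tuples of length at least three are `E_n`-equivalent.
Since the `E₁`-classes are convex, the order between points of distinct classes only depends
on the classes, so any embedding orders the six classes linearly. The gadget of the
permutation listing the classes in increasing order, together with the single points of the
third and fourth classes, is then a copy of `B`.
-/

open Function Set

section FibersConvex

variable {α ι : Type*} {s : α → α → Prop} {c : α → ι}

def FibersConvex (s : α → α → Prop) (c : α → ι) : Prop :=
  ∀ ⦃a b d : α⦄, s a b → s b d → c a = c d → c a = c b

variable [IsStrictTotalOrder α s]

lemma FibersConvex.rel_of_rel_left (hc : FibersConvex s c) {a a' b : α} (hab : s a b)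
    (ha : c a = c a') (hne : c a ≠ c b) : s a' b := by
  rcases trichotomous_of s a' b with h | rfl | h
  · exact h
  · exact absurd ha hne
  · exact absurd (hc hab h ha) hne

lemma FibersConvex.rel_of_rel_right (hc : FibersConvex s c) {a b b' : α} (hab : s a b)
    (hb : c b = c b') (hne : c a ≠ c b) : s a b' := by
  rcases trichotomous_of s a b' with h | rfl | h
  · exact h
  · exact absurd hb.symm hne
  · exact absurd ((hc h hab hb.symm).symm.trans hb.symm) hne

lemma FibersConvex.rel_of_rel (hc : FibersConvex s c) {a a' b b' : α} (hab : s a b)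
    (ha : c a = c a') (hb : c b = c b') (hne : c a ≠ c b) : s a' b' :=
  hc.rel_of_rel_left (hc.rel_of_rel_right hab hb hne) ha (hb ▸ hne)

end FibersConvex

lemma exists_equiv_fin_rel_of_lt {α : Type*} [Fintype α] (s : α → α → Prop)
    [IsStrictTotalOrder α s] {n : ℕ} (h : Fintype.card α = n) :
    ∃ e : Fin n ≃ α, ∀ i j, i < j → s (e i) (e j) := by
  classical
  let _ : LinearOrder α := linearOrderOfSTO s
  exact ⟨(monoEquivOfFin α h).toEquiv, fun _ _ hij => (monoEquivOfFin α h).strictMono hij⟩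

lemma Function.Injective.exists_eq_comp_of_range_subset {ι κ α β : Type*} {f : α → β}
    (hf : Injective f) {x : ι → β} {p : κ → α} (h : range x ⊆ range (f ∘ p)) :
    ∃ x' : ι → α, x = f ∘ x' ∧ range x' ⊆ range p := by
  obtain ⟨x', rfl⟩ := range_subset_range_iff_exists_comp.1 (h.trans (range_comp_subset_range p f))
  exact ⟨x', rfl, by rwa [range_comp, range_comp, image_subset_image_iff hf] at h⟩

lemma Fin.comp_append {α β : Type*} {m n : ℕ} (f : α → β) (x : Fin m → α) (y : Fin n → α) :
    f ∘ Fin.append x y = Fin.append (f ∘ x) (f ∘ y) := by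
  funext i
  refine Fin.addCases (fun j => ?_) (fun j => ?_) i <;> simp

lemma eRel_embedding_comp_iff {A M : Type*} [L₀.Structure A] [L₀.Structure M] (f : A ↪[L₀] M)
    {n : ℕ} (hn : 0 < n) (x y : Fin n → A) :
    ERel M n hn (f ∘ x) (f ∘ y) ↔ ERel A n hn x y := by
  rw [ERel, ← Fin.comp_append]
  exact f.map_rel _ _

universe u in
lemma nonempty_embedding_of_age_eq_K₀ {M C : Type u} [L₀.Structure M] [L₀.Structure C]
    [Finite C] (hage : L₀.age M = K₀) (hC : IsK0Struct C) : Nonempty (C ↪[L₀] M) := by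
  obtain ⟨-, h⟩ : (Bundled.of C : Bundled L₀.Structure) ∈ L₀.age M := hage ▸ ⟨‹Finite C›, hC⟩
  exact h

def labelRel {V β : Type*} (F : ℕ → Set V → β) (n : ℕ) (x y : Fin n → V) : Prop :=
  Injective x ∧ Injective y ∧ F n (range x) = F n (range y)

abbrev labelStructure {V β : Type*} (F : ℕ → Set V → β) : L₀.Structure V where
  funMap f := f.elim
  RelMap {_} R v := labelRel F R.1 (fun i => v (Fin.cast R.2.2.symm (Fin.castAdd R.1 i)))
    (fun i => v (Fin.cast R.2.2.symm (Fin.natAdd R.1 i)))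

lemma labelStructure_eRel_iff {V β : Type*} (F : ℕ → Set V → β) {n : ℕ} (hn : 0 < n)
    (x y : Fin n → V) :
    @ERel V (labelStructure F) n hn x y ↔
      Injective x ∧ Injective y ∧ F n (range x) = F n (range y) := by
  have hx : (fun i => Fin.append x y (Fin.cast rfl (Fin.castAdd n i))) = x :=
    funext (Fin.append_left x y)
  have hy : (fun i => Fin.append x y (Fin.cast rfl (Fin.natAdd n i))) = y :=
    funext (Fin.append_right x y)
  show labelRel F n (fun i => Fin.append x y (Fin.cast rfl (Fin.castAdd n i)))
    (fun i => Fin.append x y (Fin.cast rfl (Fin.natAdd n i))) ↔ _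
  rw [hx, hy, labelRel]

lemma labelStructure_isK0Struct {V β : Type*} (F : ℕ → Set V → β) :
    @IsK0Struct V (labelStructure F) := by
  intro n hn
  have hE := labelStructure_eRel_iff F hn
  refine ⟨fun x y h => ⟨((hE x y).1 h).1, ((hE x y).1 h).2.1⟩, fun x y σ τ h => ?_,
    fun x hx => (hE x x).2 ⟨hx, hx, rfl⟩, fun x y h => ?_, fun x y z h h' => ?_⟩
  · obtain ⟨hx, hy, h⟩ := (hE x y).1 h
    refine (hE _ _).2 ⟨hx.comp σ.injective, hy.comp τ.injective, ?_⟩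
    rwa [σ.surjective.range_comp, τ.surjective.range_comp]
  · obtain ⟨hx, hy, h⟩ := (hE x y).1 h
    exact (hE y x).2 ⟨hy, hx, h.symm⟩
  · obtain ⟨hx, -, h⟩ := (hE x y).1 h
    obtain ⟨-, hz, h'⟩ := (hE y z).1 h'
    exact (hE x z).2 ⟨hx, hz, h.trans h'⟩

def IsCopyOfB (M : Type*) [L₀.Structure M] (r : M → M → Prop) (a : Fin 6 → M) : Prop :=
  (∀ i j : Fin 6, i < j → r (a i) (a j)) ∧
  (∀ u v : M, u ∈ range a → v ∈ range a → u ≠ v →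
      ¬ ERel M 1 one_pos (fun _ => u) (fun _ => v)) ∧
  ERel M 2 two_pos ![a 0, a 1] ![a 4, a 5] ∧
  (∀ x y : Fin 2 → M, Injective x → Injective y → range x ⊆ range a → range y ⊆ range a →
      range x ≠ range y →
      ¬ (range x = ({a 0, a 1} : Set M) ∧ range y = ({a 4, a 5} : Set M)) →
      ¬ (range x = ({a 4, a 5} : Set M) ∧ range y = ({a 0, a 1} : Set M)) →
      ¬ ERel M 2 two_pos x y) ∧
  (∀ (k : ℕ) (hk : 0 < k), k = 3 ∨ k = 4 ∨ k = 5 →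
      ∀ x y : Fin k → M, Injective x → Injective y → range x ⊆ range a → range y ⊆ range a →
        ERel M k hk x y)

lemma IsCopyOfB.map {A M : Type*} [L₀.Structure A] [L₀.Structure M] {r : M → M → Prop}
    (f : A ↪[L₀] M) {p : Fin 6 → A} (hp : IsCopyOfB A (r on f) p) : IsCopyOfB M r (f ∘ p) := by
  obtain ⟨hlt, hE₁, hE₂, hnE₂, hEk⟩ := hp
  refine ⟨hlt, ?_, ?_, ?_, ?_⟩
  · rintro _ _ ⟨i, rfl⟩ ⟨j, rfl⟩ hij
    exact (eRel_embedding_comp_iff f one_pos (fun _ => p i) (fun _ => p j)).not.2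
      (hE₁ _ _ ⟨i, rfl⟩ ⟨j, rfl⟩ (ne_of_apply_ne f hij))
  · have hpair : ∀ a b : A, ![f a, f b] = f ∘ ![a, b] := fun a b => by
      ext i; fin_cases i <;> rfl
    simpa only [comp_apply, hpair, eRel_embedding_comp_iff] using hE₂
  · intro x y hx hy hxp hyp
    obtain ⟨x, rfl, hx'⟩ := f.injective.exists_eq_comp_of_range_subset hxp
    obtain ⟨y, rfl, hy'⟩ := f.injective.exists_eq_comp_of_range_subset hyp
    simp only [range_comp, comp_apply, ← image_pair f, ne_eq, f.injective.image_injective.eq_iff,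
      eRel_embedding_comp_iff]
    exact hnE₂ x y hx.of_comp hy.of_comp hx' hy'
  · intro k hk hk' x y hx hy hxp hyp
    obtain ⟨x, rfl, hx'⟩ := f.injective.exists_eq_comp_of_range_subset hxp
    obtain ⟨y, rfl, hy'⟩ := f.injective.exists_eq_comp_of_range_subset hyp
    exact (eRel_embedding_comp_iff f hk x y).2 (hEk k hk hk' x y hx.of_comp hy.of_comp hx' hy')

/-- The gadget points `(σ, 0), …, (σ, 3)` lie in the classes `σ 0, σ 1, σ 4, σ 5`; `.inr i` is the
extra point of class `i`. -/
abbrev Gadgets : Type := (Equiv.Perm (Fin 6) × Fin 4) ⊕ Fin 6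

namespace Gadgets

def cls : Gadgets → Fin 6
  | .inl (σ, j) => σ (![0, 1, 4, 5] j)
  | .inr i => i

lemma cls_surjective : Surjective cls := fun i => ⟨.inr i, rfl⟩

def low (σ : Equiv.Perm (Fin 6)) : Set Gadgets := {.inl (σ, 0), .inl (σ, 1)}

def high (σ : Equiv.Perm (Fin 6)) : Set Gadgets := {.inl (σ, 2), .inl (σ, 3)}

lemma low_injective : Function.Injective low := by
  intro σ τ h
  have : (.inl (σ, 0) : Gadgets) ∈ low τ := h ▸ Or.inl rfl
  simpa [low] using this

lemma high_injective : Function.Injective high := by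
  intro σ τ h
  have : (.inl (σ, 2) : Gadgets) ∈ high τ := h ▸ Or.inl rfl
  simpa [high] using this

lemma low_ne_high (σ τ : Equiv.Perm (Fin 6)) : low σ ≠ high τ := by
  intro h
  have : (.inl (σ, 0) : Gadgets) ∈ high τ := h ▸ Or.inl rfl
  simp [high] at this

open Classical in
noncomputable def pairLabel (P : Set Gadgets) : Set Gadgets :=
  if h : ∃ σ, P = high σ then low h.choose else P

lemma pairLabel_high (σ : Equiv.Perm (Fin 6)) : pairLabel (high σ) = low σ := by
  have h : ∃ τ, high σ = high τ := ⟨σ, rfl⟩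
  rw [pairLabel, dif_pos h]
  exact congrArg low (high_injective h.choose_spec).symm

lemma pairLabel_of_forall_ne {P : Set Gadgets} (hP : ∀ σ, P ≠ high σ) : pairLabel P = P :=
  dif_neg (not_exists.2 hP)

lemma pairLabel_low (σ : Equiv.Perm (Fin 6)) : pairLabel (low σ) = low σ :=
  pairLabel_of_forall_ne (low_ne_high σ)

lemma eq_or_of_pairLabel_eq {P Q : Set Gadgets} (h : pairLabel P = pairLabel Q) :
    P = Q ∨ ∃ σ, (P = low σ ∧ Q = high σ) ∨ (P = high σ ∧ Q = low σ) := by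
  by_cases hP : ∃ σ, P = high σ <;> by_cases hQ : ∃ σ, Q = high σ
  · obtain ⟨σ, rfl⟩ := hP
    obtain ⟨τ, rfl⟩ := hQ
    rw [pairLabel_high, pairLabel_high] at h
    exact .inl (congrArg high (low_injective h))
  · obtain ⟨σ, rfl⟩ := hP
    rw [pairLabel_high, pairLabel_of_forall_ne (not_exists.1 hQ)] at h
    exact .inr ⟨σ, .inr ⟨rfl, h.symm⟩⟩
  · obtain ⟨σ, rfl⟩ := hQ
    rw [pairLabel_high, pairLabel_of_forall_ne (not_exists.1 hP)] at h
    exact .inr ⟨σ, .inl ⟨h, rfl⟩⟩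
  · rw [pairLabel_of_forall_ne (not_exists.1 hP), pairLabel_of_forall_ne (not_exists.1 hQ)] at h
    exact .inl h

noncomputable def label : ℕ → Set Gadgets → Set Gadgets
  | 1, S => cls ⁻¹' (cls '' S)
  | 2, S => pairLabel S
  | _, _ => ∅

noncomputable instance : L₀.Structure Gadgets := labelStructure label

lemma eRel_iff {n : ℕ} (hn : 0 < n) (x y : Fin n → Gadgets) :
    ERel Gadgets n hn x y ↔
      Function.Injective x ∧ Function.Injective y ∧ label n (range x) = label n (range y) :=
  labelStructure_eRel_iff label hn x y

lemma eRel_one_iff (a b : Gadgets) :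
    ERel Gadgets 1 one_pos (fun _ => a) (fun _ => b) ↔ cls a = cls b := by
  simp only [eRel_iff, label, range_const, image_singleton,
    (preimage_injective.2 cls_surjective).eq_iff, singleton_eq_singleton_iff]
  exact ⟨fun h => h.2.2, fun h => ⟨injective_of_subsingleton _, injective_of_subsingleton _, h⟩⟩

lemma isK0Struct : IsK0Struct Gadgets := labelStructure_isK0Struct label

def points (π : Equiv.Perm (Fin 6)) : Fin 6 → Gadgets :=
  ![.inl (π, 0), .inl (π, 1), .inr (π 2), .inr (π 3), .inl (π, 2), .inl (π, 3)]

lemma cls_points (π : Equiv.Perm (Fin 6)) (i : Fin 6) : cls (points π i) = π i := by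
  fin_cases i <;> rfl

lemma eq_of_inl_mem_range_points {π σ : Equiv.Perm (Fin 6)} {j : Fin 4}
    (h : .inl (σ, j) ∈ range (points π)) : σ = π := by
  obtain ⟨i, hi⟩ := h
  fin_cases i <;> simp_all [points]

lemma not_eRel_two_points {π : Equiv.Perm (Fin 6)} {x y : Fin 2 → Gadgets}
    (hx : range x ⊆ range (points π)) (hne : range x ≠ range y)
    (hlh : ¬ (range x = low π ∧ range y = high π))
    (hhl : ¬ (range x = high π ∧ range y = low π)) : ¬ ERel Gadgets 2 two_pos x y := by
  intro h
  obtain ⟨-, -, h⟩ := (eRel_iff two_pos x y).1 h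
  rcases eq_or_of_pairLabel_eq h with h | ⟨σ, ⟨hxσ, hyσ⟩ | ⟨hxσ, hyσ⟩⟩
  · exact hne h
  · have hσ : (.inl (σ, 0) : Gadgets) ∈ range x := hxσ ▸ Or.inl rfl
    obtain rfl := eq_of_inl_mem_range_points (hx hσ)
    exact hlh ⟨hxσ, hyσ⟩
  · have hσ : (.inl (σ, 2) : Gadgets) ∈ range x := hxσ ▸ Or.inl rfl
    obtain rfl := eq_of_inl_mem_range_points (hx hσ)
    exact hhl ⟨hxσ, hyσ⟩

lemma exists_isCopyOfB (s : Gadgets → Gadgets → Prop) [IsStrictTotalOrder Gadgets s]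
    (hc : FibersConvex s cls) : ∃ p, IsCopyOfB Gadgets s p := by
  have := Sum.inr_injective.isStrictTotalOrder_onFun (r := s) (α := Fin 6)
  obtain ⟨π, hπ⟩ := exists_equiv_fin_rel_of_lt (s on .inr) (Fintype.card_fin 6)
  refine ⟨points π, fun i j hij => ?_, ?_, ?_, fun x y _ _ hx _ => not_eRel_two_points hx, ?_⟩
  · exact hc.rel_of_rel (hπ i j hij) (cls_points π i).symm (cls_points π j).symm
      (π.injective.ne hij.ne)
  · rintro _ _ ⟨i, rfl⟩ ⟨j, rfl⟩ hij
    rw [eRel_one_iff, cls_points, cls_points]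
    exact π.injective.ne (ne_of_apply_ne _ hij)
  · refine (eRel_iff two_pos _ _).2 ⟨by simp [points], by simp [points], ?_⟩
    show pairLabel (range ![_, _]) = pairLabel (range ![_, _])
    rw [Matrix.range_cons_cons_empty, Matrix.range_cons_cons_empty]
    exact (pairLabel_low π).trans (pairLabel_high π).symm
  · intro k hk hk' x y hx hy _ _
    refine (eRel_iff hk x y).2 ⟨hx, hy, ?_⟩
    rcases hk' with rfl | rfl | rfl <;> rfl

end Gadgets

lemma range_fin_six {α : Type*} (a : Fin 6 → α) :
    range a = {a 0, a 1, a 2, a 3, a 4, a 5} := by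
  ext u
  simp [Fin.exists_fin_succ, eq_comm]

theorem M0_B_embeds_general (M₀ : Type) [L₀.Structure M₀]
    (hage : L₀.age M₀ = K₀)
    (r : M₀ → M₀ → Prop) (hr : IsStrictTotalOrder M₀ r)
    (hconv : ∀ a b c : M₀, r a b → r b c → ERel M₀ 1 one_pos (fun _ => a) (fun _ => c) →
        ERel M₀ 1 one_pos (fun _ => a) (fun _ => b)) :
    ∃ a₁ a₂ a₃ a₄ b₁ b₂ : M₀,
      r a₁ a₂ ∧ r a₂ a₃ ∧ r a₃ a₄ ∧ r a₄ b₁ ∧ r b₁ b₂ ∧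
      -- all six elements lie in pairwise distinct E₁-classes
      (∀ u v : M₀, u ∈ ({a₁, a₂, a₃, a₄, b₁, b₂} : Set M₀) →
          v ∈ ({a₁, a₂, a₃, a₄, b₁, b₂} : Set M₀) → u ≠ v →
          ¬ ERel M₀ 1 one_pos (fun _ => u) (fun _ => v)) ∧
      -- the pairs {a₁, a₂} and {b₁, b₂} are E₂-equivalent
      ERel M₀ 2 two_pos ![a₁, a₂] ![b₁, b₂] ∧
      -- all other pairs of distinct two-element subsets of B are E₂-inequivalent
      (∀ x y : Fin 2 → M₀, Function.Injective x → Function.Injective y →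
          Set.range x ⊆ ({a₁, a₂, a₃, a₄, b₁, b₂} : Set M₀) →
          Set.range y ⊆ ({a₁, a₂, a₃, a₄, b₁, b₂} : Set M₀) →
          Set.range x ≠ Set.range y →
          ¬ (Set.range x = ({a₁, a₂} : Set M₀) ∧ Set.range y = ({b₁, b₂} : Set M₀)) →
          ¬ (Set.range x = ({b₁, b₂} : Set M₀) ∧ Set.range y = ({a₁, a₂} : Set M₀)) →
          ¬ ERel M₀ 2 two_pos x y) ∧
      -- for k ∈ {3, 4, 5} all k-element subsets of B are E_k-equivalent
      (∀ (k : ℕ) (hk : 0 < k), k = 3 ∨ k = 4 ∨ k = 5 →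
          ∀ x y : Fin k → M₀, Function.Injective x → Function.Injective y →
            Set.range x ⊆ ({a₁, a₂, a₃, a₄, b₁, b₂} : Set M₀) →
            Set.range y ⊆ ({a₁, a₂, a₃, a₄, b₁, b₂} : Set M₀) →
            ERel M₀ k hk x y) := by
  obtain ⟨f⟩ := nonempty_embedding_of_age_eq_K₀ hage Gadgets.isK0Struct
  have := f.injective.isStrictTotalOrder_onFun (r := r)
  have hc : FibersConvex (r on f) Gadgets.cls := fun a b d hab hbd had => by
    rw [← Gadgets.eRel_one_iff, ← eRel_embedding_comp_iff f] at had ⊢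
    exact hconv _ _ _ hab hbd had
  obtain ⟨p, hp⟩ := Gadgets.exists_isCopyOfB (r on f) hc
  obtain ⟨hlt, hE₁, hE₂, hnE₂, hEk⟩ := hp.map f
  rw [range_fin_six] at hE₁ hnE₂ hEk
  exact ⟨_, _, _, _, _, _, hlt 0 1 (by decide), hlt 1 2 (by decide), hlt 2 3 (by decide),
    hlt 3 4 (by decide), hlt 4 5 (by decide), hE₁, hE₂, hnE₂, hEk⟩

/-- if `<` is a strict linear order on `M₀` making `(M₀, <)` ultrahomogeneous
and every `E₁`-class is convex, then the six-element ordered structure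
`B = {a₁ < a₂ < a₃ < a₄ < b₁ < b₂}` described below embeds into `(M₀, <)`. -/
theorem M0_B_embeds (M₀ : Type) [L₀.Structure M₀] [Countable M₀]
    (hUH : L₀.IsUltrahomogeneous M₀) (hage : L₀.age M₀ = K₀)
    (r : M₀ → M₀ → Prop) (hr : IsStrictTotalOrder M₀ r)
    (hUH' : @Language.IsUltrahomogeneous L₀lt M₀ (expStr M₀ r))
    (hconv : ∀ a b c : M₀, r a b → r b c → ERel M₀ 1 one_pos (fun _ => a) (fun _ => c) →
        ERel M₀ 1 one_pos (fun _ => a) (fun _ => b)) :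
    ∃ a₁ a₂ a₃ a₄ b₁ b₂ : M₀,
      r a₁ a₂ ∧ r a₂ a₃ ∧ r a₃ a₄ ∧ r a₄ b₁ ∧ r b₁ b₂ ∧
      -- all six elements lie in pairwise distinct E₁-classes
      (∀ u v : M₀, u ∈ ({a₁, a₂, a₃, a₄, b₁, b₂} : Set M₀) →
          v ∈ ({a₁, a₂, a₃, a₄, b₁, b₂} : Set M₀) → u ≠ v →
          ¬ ERel M₀ 1 one_pos (fun _ => u) (fun _ => v)) ∧
      -- the pairs {a₁, a₂} and {b₁, b₂} are E₂-equivalent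
      ERel M₀ 2 two_pos ![a₁, a₂] ![b₁, b₂] ∧
      -- all other pairs of distinct two-element subsets of B are E₂-inequivalent
      (∀ x y : Fin 2 → M₀, Function.Injective x → Function.Injective y →
          Set.range x ⊆ ({a₁, a₂, a₃, a₄, b₁, b₂} : Set M₀) →
          Set.range y ⊆ ({a₁, a₂, a₃, a₄, b₁, b₂} : Set M₀) →
          Set.range x ≠ Set.range y →
          ¬ (Set.range x = ({a₁, a₂} : Set M₀) ∧ Set.range y = ({b₁, b₂} : Set M₀)) →
          ¬ (Set.range x = ({b₁, b₂} : Set M₀) ∧ Set.range y = ({a₁, a₂} : Set M₀)) →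
          ¬ ERel M₀ 2 two_pos x y) ∧
      -- for k ∈ {3, 4, 5} all k-element subsets of B are E_k-equivalent
      (∀ (k : ℕ) (hk : 0 < k), k = 3 ∨ k = 4 ∨ k = 5 →
          ∀ x y : Fin k → M₀, Function.Injective x → Function.Injective y →
            Set.range x ⊆ ({a₁, a₂, a₃, a₄, b₁, b₂} : Set M₀) →
            Set.range y ⊆ ({a₁, a₂, a₃, a₄, b₁, b₂} : Set M₀) →
            ERel M₀ k hk x y) :=
  M0_B_embeds_general M₀ hage r hr hconv
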